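/- Let φ : [0,∞) → ℝ be continuous, C¹ on (0,∞) as a function of both variables φ(λ,y), with ∂φ/∂y > 0 and y ↦ (∂φ/∂λ)/(∂φ/∂y)(λ,y) non-decreasing for each λ > 0, and with τ₋(λ) = lim_{y→-∞} φ(λ,y) non-increasing and τ₊(λ) = lim_{y→+∞} φ(λ,y) either ≡ +∞ or non-decreasing and C¹. Let Y have a positive continuous density with log-concave survival function, satisfy E|φ(η,Y)| < ∞ and E[sup_{0<λ≤η} |∂φ/∂λ(λ,Y)|] < ∞ for all η > 0, and E[φ(λ,Y)] = 0 for all λ ≥ 0. Then (φ(λ,Y))_{λ≥0} is a centered process increasing in the mean residual life order. -/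

import Mathlib

/-!
Where `φ(λ,·)` crosses the level `x` at a point `y_λ`, the event `{φ(λ,Y) ≥ x}` is `{Y ≥ y_λ}`,
so `Ψ_λ(x) = x + E[(φ(λ,Y) - x)⁺] / S(y_λ)` with `S` the survival function of `Y`. The numerator is
differentiated under the integral sign, and `y_λ` by the implicit function theorem, with
`y_λ' = -r` where `r = (∂_λφ / ∂_yφ)(λ, y_λ)`; so `∂_λ Ψ_λ(x) ≥ 0` reads
`E[∂_λφ(λ,Y); Y ≥ y_λ] S(y_λ) ≥ E[(φ(λ,Y) - x)⁺] f(y_λ) r`.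
If `r ≤ 0` the left side is nonnegative: `E[∂_λφ(λ,Y)] = 0` by differentiating the centering, and
`∂_λφ ≤ r ∂_yφ ≤ 0` below `y_λ` by the monotone ratio. If `r > 0`, the monotone ratio gives
`E[∂_λφ; Y ≥ y_λ] ≥ r E[∂_yφ(λ,Y); Y ≥ y_λ] = r ∫_{y_λ}^∞ ∂_yφ f`, while by the layer-cake formula
`E[(φ(λ,Y) - x)⁺] = ∫_{y_λ}^∞ ∂_yφ S`; the two are compared through the increasing hazard rate
`f / S`, which is the log-concavity of `S`.
The limits `τ₋` and `τ₊` keep `λ` in this regime once it is entered; outside it `Ψ_λ(x)` equals `x`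
or `E φ(λ,Y) = 0`, both at most `Ψ_μ(x)` for `μ ≥ λ`. The case `λ = 0` follows from the lower
semicontinuity of `Ψ` under dominated pointwise convergence.
-/

open MeasureTheory Set Filter Topology

section Survival

variable {f : ℝ → ℝ}

noncomputable def survival (f : ℝ → ℝ) (z : ℝ) : ℝ := ∫ u in Ici z, f u

theorem survival_pos (hf_pos : ∀ u, 0 < f u) (hf_int : Integrable f) (z : ℝ) :
    0 < survival f z := by
  rw [survival, setIntegral_pos_iff_support_of_nonneg_ae
    (ae_of_all _ fun u => (hf_pos u).le) hf_int.integrableOn,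
    Function.support_eq_univ fun u => (hf_pos u).ne', univ_inter, Real.volume_Ici]
  exact ENNReal.zero_lt_top

theorem survival_sub_survival (hf_int : Integrable f) (a b : ℝ) :
    survival f a - survival f b = ∫ u in a..b, f u := by
  have h : ∀ c, survival f c = (∫ u, f u) - ∫ u in Iic c, f u := fun c => by
    rw [survival, integral_Ici_eq_integral_Ioi,
      ← intervalIntegral.integral_Iic_add_Ioi hf_int.integrableOn hf_int.integrableOn]
    ring
  rw [h, h, ← intervalIntegral.integral_Iic_sub_Iic hf_int.integrableOn hf_int.integrableOn]
  ring

theorem hasDerivAt_survival (hf_cont : Continuous f) (hf_int : Integrable f) (z : ℝ) :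
    HasDerivAt (survival f) (-f z) z := by
  have h : survival f = fun c => survival f 0 - ∫ u in (0 : ℝ)..c, f u :=
    funext fun c => by rw [← survival_sub_survival hf_int]; ring
  rw [h]
  exact ((hf_cont.integral_hasStrictDerivAt 0 z).hasDerivAt).const_sub _

theorem mul_survival_le_mul_survival (hf_pos : ∀ u, 0 < f u) (hf_cont : Continuous f)
    (hf_int : Integrable f) (hconc : ConcaveOn ℝ univ fun z => Real.log (survival f z))
    {a b : ℝ} (hab : a ≤ b) : f a * survival f b ≤ f b * survival f a := by
  have hS := survival_pos hf_pos hf_int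
  have hlog : ∀ z, HasDerivAt (fun z => Real.log (survival f z)) (-f z / survival f z) z :=
    fun z => (hasDerivAt_survival hf_cont hf_int z).log (hS z).ne'
  have hanti := hconc.antitoneOn_deriv fun z _ => (hlog z).differentiableAt
  have := hanti (mem_univ a) (mem_univ b) hab
  rw [(hlog a).deriv, (hlog b).deriv, neg_div, neg_div, neg_le_neg_iff,
    div_le_div_iff₀ (hS a) (hS b)] at this
  exact this

end Survival

section Density

variable {Ω : Type*} [MeasurableSpace Ω] {P : Measure Ω} {Y : Ω → ℝ} {f : ℝ → ℝ}

theorem integrable_of_density [IsProbabilityMeasure P]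
    (hf_density : ∀ s, MeasurableSet s → P (Y ⁻¹' s) = ENNReal.ofReal (∫ u in s, f u)) :
    Integrable f := by
  by_contra hf
  have h := hf_density univ MeasurableSet.univ
  rw [preimage_univ, measure_univ, Measure.restrict_univ, integral_undef hf] at h
  simp at h

theorem map_eq_withDensity (hY : Measurable Y) (hf_nonneg : ∀ u, 0 ≤ f u) (hf_int : Integrable f)
    (hf_density : ∀ s, MeasurableSet s → P (Y ⁻¹' s) = ENNReal.ofReal (∫ u in s, f u)) :
    P.map Y = volume.withDensity fun u => ENNReal.ofReal (f u) := by
  ext s hs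
  rw [Measure.map_apply hY hs, hf_density s hs, withDensity_apply _ hs,
    ofReal_integral_eq_lintegral_ofReal hf_int.integrableOn (ae_of_all _ hf_nonneg)]

theorem lintegral_ofReal_comp_max_sub {h h' : ℝ → ℝ} (hh : ∀ u, HasDerivAt h (h' u) u)
    (hh'_cont : Continuous h') (hh'_nonneg : ∀ u, 0 ≤ h' u) (hY : Measurable Y) (r : ℝ) :
    ∫⁻ ω, ENNReal.ofReal (h (max (Y ω) r) - h r) ∂P
      = ∫⁻ u in Ioi r, P {ω | u ≤ Y ω} * ENNReal.ofReal (h' u) := by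
  have hcake := lintegral_comp_eq_lintegral_meas_le_mul P (f := fun ω => max (Y ω) r - r)
    (g := fun t => h' (r + t)) (ae_of_all _ fun ω => by simp)
    ((hY.max measurable_const).sub_const r).aemeasurable
    (fun t _ => (hh'_cont.comp (continuous_const_add r)).intervalIntegrable 0 t)
    (ae_of_all _ fun t => hh'_nonneg _)
  have hftc : ∀ ω, ∫ t in (0:ℝ)..max (Y ω) r - r, h' (r + t) = h (max (Y ω) r) - h r := by
    intro ω
    rw [intervalIntegral.integral_comp_add_left, intervalIntegral.integral_eq_sub_of_hasDerivAt
      (fun u _ => hh u) (hh'_cont.intervalIntegrable _ _)]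
    simp
  have hshift : (r + ·) ⁻¹' Ioi r = Ioi 0 := by simp
  simp only [hftc] at hcake
  rw [hcake]
  conv_rhs => rw [← (measurePreserving_add_left volume r).setLIntegral_comp_preimage_emb
    (measurableEmbedding_addLeft r), hshift]
  refine setLIntegral_congr_fun measurableSet_Ioi fun t (ht : 0 < t) => ?_
  congr 2
  ext ω
  change t ≤ max (Y ω) r - r ↔ r + t ≤ Y ω
  rw [le_sub_iff_add_le, le_max_iff]
  constructor
  · rintro (h | h) <;> linarith
  · exact fun h => Or.inl (by linarith)

theorem density_mul_lintegral_max_sub_le [IsProbabilityMeasure P] (hY : Measurable Y)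
    (hf_pos : ∀ u, 0 < f u) (hf_cont : Continuous f)
    (hf_density : ∀ s, MeasurableSet s → P (Y ⁻¹' s) = ENNReal.ofReal (∫ u in s, f u))
    (hconc : ConcaveOn ℝ univ fun z => Real.log (survival f z))
    {h h' : ℝ → ℝ} (hh : ∀ u, HasDerivAt h (h' u) u) (hh'_cont : Continuous h')
    (hh'_nonneg : ∀ u, 0 ≤ h' u) (r : ℝ) :
    ENNReal.ofReal (f r) * ∫⁻ ω, ENNReal.ofReal (h (max (Y ω) r) - h r) ∂P
      ≤ ENNReal.ofReal (survival f r) * ∫⁻ ω in Y ⁻¹' Ici r, ENNReal.ofReal (h' (Y ω)) ∂P := by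
  have hf_int := integrable_of_density hf_density
  have hh'_meas : Measurable fun u => ENNReal.ofReal (h' u) := hh'_cont.measurable.ennreal_ofReal
  rw [lintegral_ofReal_comp_max_sub hh hh'_cont hh'_nonneg hY,
    ← setLIntegral_map measurableSet_Ici hh'_meas hY,
    map_eq_withDensity hY (fun u => (hf_pos u).le) hf_int hf_density,
    setLIntegral_withDensity_eq_setLIntegral_mul _ hf_cont.measurable.ennreal_ofReal hh'_meas
      measurableSet_Ici, ← lintegral_const_mul' _ _ ENNReal.ofReal_ne_top,
    ← lintegral_const_mul' _ _ ENNReal.ofReal_ne_top]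
  refine (setLIntegral_mono' measurableSet_Ioi fun u (hu : r < u) => ?_).trans
    (lintegral_mono_set Ioi_subset_Ici_self)
  have hSu : P {ω | u ≤ Y ω} = ENNReal.ofReal (survival f u) := hf_density _ measurableSet_Ici
  have hhaz := mul_survival_le_mul_survival hf_pos hf_cont hf_int hconc hu.le
  simp only [Pi.mul_apply, hSu, ← ENNReal.ofReal_mul (hf_pos _).le,
    ← ENNReal.ofReal_mul (survival_pos hf_pos hf_int _).le]
  refine ENNReal.ofReal_le_ofReal ?_
  rw [← mul_assoc, ← mul_assoc, mul_comm (survival f r)]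
  exact mul_le_mul_of_nonneg_right hhaz (hh'_nonneg u)

end Density

section HardyLittlewood

variable {Ω : Type*} [MeasurableSpace Ω] {P : Measure Ω} {X : Ω → ℝ} {x : ℝ}

/-- When `P {x ≤ X} = 0` the quotient is `_ / 0 = 0`, which gives the convention `Ψ(x) = x`. -/
noncomputable def hardyLittlewood (P : Measure Ω) (X : Ω → ℝ) (x : ℝ) : ℝ :=
  x + (∫ ω, max (X ω - x) 0 ∂P) / (P {ω | x ≤ X ω}).toReal

theorem ite_eq_hardyLittlewood :
    (if P {ω | x ≤ X ω} ≠ 0 then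
      x + (∫ ω, max (X ω - x) 0 ∂P) / (P {ω | x ≤ X ω}).toReal else x)
      = hardyLittlewood P X x := by
  split_ifs with h
  · rfl
  · rw [hardyLittlewood, not_not.1 h, ENNReal.toReal_zero, div_zero, add_zero]

theorem le_hardyLittlewood : x ≤ hardyLittlewood P X x :=
  le_add_of_nonneg_right <|
    div_nonneg (integral_nonneg fun _ => le_max_right _ _) ENNReal.toReal_nonneg

theorem integral_max_sub_eq_zero (h : P {ω | x ≤ X ω} = 0) :
    ∫ ω, max (X ω - x) 0 ∂P = 0 := by
  rw [← setIntegral_eq_integral_of_forall_compl_eq_zero (s := {ω | x ≤ X ω}),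
    setIntegral_measure_zero _ h]
  intro ω hω
  exact max_eq_right (by linarith [not_le.1 (show ¬ x ≤ X ω from hω)])

theorem hardyLittlewood_eq_self (h : ∀ ω, X ω ≤ x) : hardyLittlewood P X x = x := by
  have : ∀ ω, max (X ω - x) 0 = 0 := fun ω => max_eq_right (by linarith [h ω])
  simp [hardyLittlewood, this]

theorem integrable_max_sub [IsFiniteMeasure P] (hX : Integrable X P) (x : ℝ) :
    Integrable (fun ω => max (X ω - x) 0) P :=
  (hX.sub (integrable_const x)).pos_part

theorem tendsto_integral_max_sub [IsFiniteMeasure P] {X : ℕ → Ω → ℝ} {X₀ : Ω → ℝ}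
    {bound : Ω → ℝ} (hX : ∀ n, Measurable (X n)) (hbound : Integrable bound P)
    (hX_le : ∀ n ω, |X n ω| ≤ bound ω) (hlim : ∀ ω, Tendsto (fun n => X n ω) atTop (𝓝 (X₀ ω))) :
    Tendsto (fun n => ∫ ω, max (X n ω - x) 0 ∂P) atTop (𝓝 (∫ ω, max (X₀ ω - x) 0 ∂P)) := by
  refine tendsto_integral_of_dominated_convergence (fun ω => bound ω + |x|)
    (fun n => (((hX n).sub_const x).max measurable_const).aestronglyMeasurable)
    (hbound.add (integrable_const _)) (fun n => Eventually.of_forall fun ω => ?_)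
    (Eventually.of_forall fun ω => ((hlim ω).sub_const x).max tendsto_const_nhds)
  rw [Real.norm_eq_abs, abs_of_nonneg (le_max_right _ _)]
  rcases le_total (X n ω - x) 0 with h | h
  · rw [max_eq_right h]; linarith [abs_nonneg x, (abs_nonneg _).trans (hX_le n ω)]
  · rw [max_eq_left h]; linarith [le_abs_self (X n ω), neg_abs_le x, hX_le n ω]

theorem tendsto_measureReal_setOf_le_inter [IsFiniteMeasure P] {X : ℕ → Ω → ℝ} {X₀ : Ω → ℝ}
    (hX : ∀ n, Measurable (X n)) (hX₀ : Measurable X₀)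
    (hlim : ∀ ω, Tendsto (fun n => X n ω) atTop (𝓝 (X₀ ω))) :
    Tendsto (fun n => P.real ({ω | x ≤ X n ω} ∩ {ω | X₀ ω < x})) atTop (𝓝 0) := by
  have := tendsto_measure_of_tendsto_indicator_of_isFiniteMeasure atTop P (A := ∅)
    (As := fun n => {ω | x ≤ X n ω} ∩ {ω | X₀ ω < x})
    (fun n => (measurableSet_le measurable_const (hX n)).inter
      (measurableSet_lt hX₀ measurable_const)) (fun ω => ?_)
  · rw [measure_empty] at this
    exact (ENNReal.tendsto_toReal ENNReal.zero_ne_top).comp this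
  by_cases hω : X₀ ω < x
  · filter_upwards [(hlim ω).eventually (eventually_lt_nhds hω)] with n hn
    simp [hn]
  · simp [hω]

theorem hardyLittlewood_le_of_tendsto [IsFiniteMeasure P] {X : ℕ → Ω → ℝ} {X₀ : Ω → ℝ}
    {bound : Ω → ℝ} {c : ℝ} (hX : ∀ n, Measurable (X n)) (hbound : Integrable bound P)
    (hX_le : ∀ n ω, |X n ω| ≤ bound ω) (hlim : ∀ ω, Tendsto (fun n => X n ω) atTop (𝓝 (X₀ ω)))
    (hc : ∀ n, hardyLittlewood P (X n) x ≤ c) : hardyLittlewood P X₀ x ≤ c := by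
  have hX₀ : Measurable X₀ := measurable_of_tendsto_metrizable hX (tendsto_pi_nhds.2 hlim)
  by_cases hp₀ : P {ω | x ≤ X₀ ω} = 0
  · rw [hardyLittlewood, hp₀, ENNReal.toReal_zero, div_zero, add_zero]
    exact le_hardyLittlewood.trans (hc 0)
  set p₀ := P.real {ω | x ≤ X₀ ω}
  have hp₀' : p₀ ≠ 0 := (ENNReal.toReal_pos hp₀ (measure_ne_top _ _)).ne'
  set D : ℕ → Set Ω := fun n => {ω | x ≤ X n ω} ∩ {ω | X₀ ω < x}
  -- `P {x ≤ X n} ≤ p₀ + P (D n)` with `P (D n) → 0` replaces the missing convergence of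
  -- `P {x ≤ X n}`, which may fail where `X₀ = x`.
  have hbound_n : ∀ n, x + (∫ ω, max (X n ω - x) 0 ∂P) / (p₀ + P.real (D n)) ≤ c := by
    intro n
    by_cases hpn : P {ω | x ≤ X n ω} = 0
    · rw [integral_max_sub_eq_zero hpn, zero_div, add_zero]
      exact le_hardyLittlewood.trans (hc n)
    refine le_trans (add_le_add_right (div_le_div_of_nonneg_left
      (integral_nonneg fun _ => le_max_right _ _) (ENNReal.toReal_pos hpn (measure_ne_top _ _))
      ?_) x) (hc n)
    calc P.real {ω | x ≤ X n ω} ≤ P.real ({ω | x ≤ X₀ ω} ∪ D n) :=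
          measureReal_mono fun ω hω => by
            by_cases h : x ≤ X₀ ω
            · exact Or.inl h
            · exact Or.inr ⟨hω, not_le.1 h⟩
      _ ≤ p₀ + P.real (D n) := measureReal_union_le _ _
  show x + _ / p₀ ≤ c
  refine le_of_tendsto' (x := atTop) ?_ hbound_n
  simpa using ((tendsto_integral_max_sub hX hbound hX_le hlim).div
    (tendsto_const_nhds.add (tendsto_measureReal_setOf_le_inter hX hX₀ hlim))
    (by simpa using hp₀')).const_add x

variable [IsProbabilityMeasure P]

theorem sub_le_integral_max_sub (hX : Integrable X P) :
    ∫ ω, X ω ∂P - x ≤ ∫ ω, max (X ω - x) 0 ∂P :=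
  calc ∫ ω, X ω ∂P - x = ∫ ω, (X ω - x) ∂P := by rw [integral_sub hX (integrable_const x)]; simp
    _ ≤ _ := integral_mono (hX.sub (integrable_const x)) (integrable_max_sub hX x)
      fun ω => le_max_left _ _

theorem integral_le_hardyLittlewood (hX : Integrable X P) :
    ∫ ω, X ω ∂P ≤ hardyLittlewood P X x := by
  by_cases hp : P {ω | x ≤ X ω} = 0
  · have hlt : ∀ᵐ ω ∂P, X ω ≤ x := by
      rw [ae_iff]
      exact measure_mono_null (fun ω hω => (not_le.1 hω).le) hp
    calc ∫ ω, X ω ∂P ≤ ∫ _ω, x ∂P := integral_mono_ae hX (integrable_const x) hlt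
      _ = x := by simp
      _ ≤ _ := le_hardyLittlewood
  · have hp_pos : 0 < (P {ω | x ≤ X ω}).toReal := ENNReal.toReal_pos hp (measure_ne_top _ _)
    have hp_le : (P {ω | x ≤ X ω}).toReal ≤ 1 :=
      ENNReal.toReal_le_of_le_ofReal zero_le_one (by simpa using prob_le_one)
    have hA : 0 ≤ ∫ ω, max (X ω - x) 0 ∂P := integral_nonneg fun ω => le_max_right _ _
    calc ∫ ω, X ω ∂P ≤ x + ∫ ω, max (X ω - x) 0 ∂P := by
          linarith [sub_le_integral_max_sub (x := x) hX]
      _ ≤ hardyLittlewood P X x := add_le_add_right (le_div_self hA hp_pos hp_le) x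

theorem hardyLittlewood_eq_integral (hX : Integrable X P) (h : ∀ ω, x ≤ X ω) :
    hardyLittlewood P X x = ∫ ω, X ω ∂P := by
  have hmax : ∀ ω, max (X ω - x) 0 = X ω - x := fun ω => max_eq_left (by linarith [h ω])
  have hset : {ω | x ≤ X ω} = univ := eq_univ_of_forall h
  simp only [hardyLittlewood, hmax, hset, measure_univ, ENNReal.toReal_one, div_one]
  rw [integral_sub hX (integrable_const x)]
  simp

end HardyLittlewood

theorem hasDerivAt_max_sub_zero {h : ℝ → ℝ} {h' l₀ x : ℝ} (hh : HasDerivAt h h' l₀)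
    (hne : h l₀ ≠ x) : HasDerivAt (fun l => max (h l - x) 0) (if x ≤ h l₀ then h' else 0) l₀ := by
  rcases hne.lt_or_gt with hlt | hgt
  · rw [if_neg hlt.not_ge]
    refine (hasDerivAt_const l₀ 0).congr_of_eventuallyEq ?_
    filter_upwards [hh.continuousAt.eventually (eventually_lt_nhds hlt)] with l hl
    exact max_eq_right (by linarith)
  · rw [if_pos hgt.le]
    refine (hh.sub_const x).congr_of_eventuallyEq ?_
    filter_upwards [hh.continuousAt.eventually (eventually_gt_nhds hgt)] with l hl
    exact max_eq_left (by linarith)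

theorem hasDerivAt_integral_max_sub {Ω : Type*} [MeasurableSpace Ω] {P : Measure Ω}
    [IsFiniteMeasure P] {F : ℝ → Ω → ℝ} {F' : Ω → ℝ} {bound : Ω → ℝ} {s : Set ℝ} {l₀ x : ℝ}
    (hs : s ∈ 𝓝 l₀) (hF_meas : ∀ l ∈ s, Measurable (F l)) (hF_int : Integrable (F l₀) P)
    (hF'_meas : AEStronglyMeasurable F' P)
    (hF_lip : ∀ ω, LipschitzOnWith (Real.nnabs (bound ω)) (F · ω) s)
    (hbound : Integrable bound P) (hF_deriv : ∀ ω, HasDerivAt (F · ω) (F' ω) l₀)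
    (hatom : P {ω | F l₀ ω = x} = 0) :
    HasDerivAt (fun l => ∫ ω, max (F l ω - x) 0 ∂P) (∫ ω in {ω | x ≤ F l₀ ω}, F' ω ∂P) l₀ := by
  have hset : MeasurableSet {ω | x ≤ F l₀ ω} :=
    measurableSet_le measurable_const (hF_meas l₀ (mem_of_mem_nhds hs))
  have hmax : LipschitzWith 1 fun t : ℝ => max (t - x) 0 :=
    LipschitzWith.of_dist_le_mul fun a b => by
      simpa [Real.dist_eq] using abs_max_sub_max_le_abs (a - x) (b - x) 0
  have hne : ∀ᵐ ω ∂P, F l₀ ω ≠ x := measure_eq_zero_iff_ae_notMem.1 hatom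
  rw [← integral_indicator hset]
  refine (hasDerivAt_integral_of_dominated_loc_of_lip hs
    (eventually_of_mem hs fun l hl =>
      (((hF_meas l hl).sub_const x).max measurable_const).aestronglyMeasurable)
    (integrable_max_sub hF_int x) (hF'_meas.indicator hset)
    (ae_of_all _ fun ω => by simpa [Function.comp_def] using hmax.comp_lipschitzOnWith (hF_lip ω))
    hbound
    (hne.mono fun ω hω => ?_)).2
  simpa [indicator_apply] using hasDerivAt_max_sub_zero (hF_deriv ω) hω

theorem ContinuousOn.continuous_slice {g : ℝ → ℝ → ℝ} {s : Set ℝ}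
    (hg : ContinuousOn (fun p : ℝ × ℝ => g p.1 p.2) (s ×ˢ univ)) {l : ℝ} (hl : l ∈ s) :
    Continuous (g l) :=
  hg.comp_continuous (continuous_const.prodMk continuous_id) fun _ => ⟨hl, trivial⟩

theorem StrictMono.setOf_le_comp_eq {Ω : Type*} {h : ℝ → ℝ} (hh : StrictMono h) {r x : ℝ}
    (hr : h r = x) (Y : Ω → ℝ) : {ω | x ≤ h (Y ω)} = Y ⁻¹' Ici r := by
  ext ω
  simp [← hr, hh.le_iff_le]

theorem lipschitzOnWith_Ioc_of_abs_le {φ φl : ℝ → ℝ → ℝ}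
    (hφl : ∀ l : ℝ, 0 < l → ∀ y : ℝ, HasDerivAt (fun l' => φ l' y) (φl l y) l)
    {η C y : ℝ} (hC : ∀ l ∈ Ioc 0 η, |φl l y| ≤ C) :
    LipschitzOnWith (Real.nnabs C) (φ · y) (Ioc 0 η) :=
  (convex_Ioc 0 η).lipschitzOnWith_of_nnnorm_hasDerivWithin_le
    (fun l hl => (hφl l hl.1 y).hasDerivWithinAt) fun l hl => by
      rw [← NNReal.coe_le_coe, coe_nnnorm, Real.norm_eq_abs, Real.coe_nnabs]
      exact (hC l hl).trans (le_abs_self C)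

theorem exists_hasDerivAt_implicit {φ φl φy : ℝ → ℝ → ℝ} {l₀ y₀ : ℝ}
    (hφl : ∀ᶠ p in 𝓝 (l₀, y₀), HasDerivAt (φ · p.2) (φl p.1 p.2) p.1)
    (hφy : ∀ᶠ p in 𝓝 (l₀, y₀), HasDerivAt (φ p.1 ·) (φy p.1 p.2) p.2)
    (hφl_cont : ContinuousAt (fun p : ℝ × ℝ => φl p.1 p.2) (l₀, y₀))
    (hφy_cont : ContinuousAt (fun p : ℝ × ℝ => φy p.1 p.2) (l₀, y₀))
    (hφy_ne : φy l₀ y₀ ≠ 0) :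
    ∃ ψ : ℝ → ℝ, ψ l₀ = y₀ ∧ (∀ᶠ l in 𝓝 l₀, φ l (ψ l) = φ l₀ y₀) ∧
      HasDerivAt ψ (-(φl l₀ y₀ / φy l₀ y₀)) l₀ := by
  let f₁ : ℝ → ℝ → ℝ →L[ℝ] ℝ := fun l y => .toSpanSingleton ℝ (φl l y)
  let f₂ : ℝ → ℝ → ℝ →L[ℝ] ℝ := fun l y => .toSpanSingleton ℝ (φy l y)
  have hspan : Continuous (ContinuousLinearMap.toSpanSingleton ℝ : ℝ → ℝ →L[ℝ] ℝ) :=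
    (ContinuousLinearMap.toSpanSingletonCLE (𝕜 := ℝ) (E := ℝ)).continuous
  have df₁ : ∀ᶠ p in 𝓝 (l₀, y₀), HasFDerivAt (φ · p.2) (f₁ p.1 p.2) p.1 :=
    hφl.mono fun p hp => hp.hasFDerivAt
  have df₂ : ∀ᶠ p in 𝓝 (l₀, y₀), HasFDerivAt (φ p.1 ·) (f₂ p.1 p.2) p.2 :=
    hφy.mono fun p hp => hp.hasFDerivAt
  have cf₁ : ContinuousAt ↿f₁ (l₀, y₀) := hspan.continuousAt.comp hφl_cont
  have cf₂ : ContinuousAt ↿f₂ (l₀, y₀) := hspan.continuousAt.comp hφy_cont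
  let e := ContinuousLinearEquiv.unitsEquivAut ℝ (Units.mk0 _ hφy_ne)
  have he : (e : ℝ →L[ℝ] ℝ) = f₂ l₀ y₀ := by ext; simp [e, f₂]
  have if₂ : (f₂ l₀ y₀).IsInvertible := ⟨e, he⟩
  have hψ :=
    (hasStrictFDerivAt_implicitFunctionOfBivariate df₁ df₂ cf₁ cf₂ if₂).hasFDerivAt.hasDerivAt
  rw [← he, ContinuousLinearMap.inverse_equiv] at hψ
  exact ⟨_,
    (eventually_apply_eq_iff_implicitFunctionOfBivariate df₁ df₂ cf₁ cf₂ if₂).self_of_nhds.1 rfl,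
    eventually_apply_implicitFunctionOfBivariate df₁ df₂ cf₁ cf₂ if₂,
    hψ.congr_deriv (by simp [e, f₁, div_eq_mul_inv])⟩

section Model

variable {Ω : Type*} [MeasurableSpace Ω] {P : Measure Ω} {Y : Ω → ℝ} {f : ℝ → ℝ}
  {φ φl φy : ℝ → ℝ → ℝ} {l r x : ℝ}

theorem integrable_partial (hYmeas : Measurable Y)
    (hφl_cont : ContinuousOn (fun p : ℝ × ℝ => φl p.1 p.2) (Set.Ioi 0 ×ˢ Set.univ))
    (hdom : ∀ η : ℝ, 0 < η → ∃ g : Ω → ℝ, Integrable g P ∧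
      ∀ ω : Ω, ∀ l ∈ Set.Ioc (0:ℝ) η, |φl l (Y ω)| ≤ g ω)
    (hl : 0 < l) : Integrable (fun ω => φl l (Y ω)) P := by
  obtain ⟨g, hg, hbound⟩ := hdom l hl
  exact hg.mono' ((hφl_cont.continuous_slice hl).measurable.comp hYmeas).aestronglyMeasurable
    (ae_of_all _ fun ω => hbound ω l ⟨hl, le_rfl⟩)

theorem integral_partial_eq_zero (hYmeas : Measurable Y)
    (hφy : ∀ l : ℝ, 0 < l → ∀ y : ℝ, HasDerivAt (fun y' => φ l y') (φy l y) y)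
    (hφl : ∀ l : ℝ, 0 < l → ∀ y : ℝ, HasDerivAt (fun l' => φ l' y) (φl l y) l)
    (hφl_cont : ContinuousOn (fun p : ℝ × ℝ => φl p.1 p.2) (Set.Ioi 0 ×ˢ Set.univ))
    (hint : ∀ η : ℝ, 0 < η → Integrable (fun ω => φ η (Y ω)) P)
    (hdom : ∀ η : ℝ, 0 < η → ∃ g : Ω → ℝ, Integrable g P ∧
      ∀ ω : Ω, ∀ l ∈ Set.Ioc (0:ℝ) η, |φl l (Y ω)| ≤ g ω)
    (hcentered : ∀ l : ℝ, 0 ≤ l → (∫ ω, φ l (Y ω) ∂P) = 0) (hl : 0 < l) :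
    ∫ ω, φl l (Y ω) ∂P = 0 := by
  obtain ⟨g, hg, hbound⟩ := hdom (2 * l) (by linarith)
  have hs : Ioo 0 (2 * l) ∈ 𝓝 l := Ioo_mem_nhds hl (by linarith)
  have hderiv := (hasDerivAt_integral_of_dominated_loc_of_lip hs
    (eventually_of_mem hs fun l' hl' =>
      ((continuous_iff_continuousAt.2 fun y => (hφy l' hl'.1 y).continuousAt).measurable.comp
        hYmeas).aestronglyMeasurable)
    (hint l hl) (integrable_partial hYmeas hφl_cont hdom hl).aestronglyMeasurable
    (ae_of_all _ fun ω => (lipschitzOnWith_Ioc_of_abs_le hφl (hbound ω)).mono Ioo_subset_Ioc_self)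
    hg
    (ae_of_all _ fun ω => hφl l hl (Y ω))).2
  refine hderiv.unique ((hasDerivAt_const l (0 : ℝ)).congr_of_eventuallyEq ?_)
  filter_upwards [hs] with l' hl'
  exact hcentered l' hl'.1.le

theorem exists_apply_lt_of_le
    (hφy : ∀ l : ℝ, 0 < l → ∀ y : ℝ, HasDerivAt (fun y' => φ l y') (φy l y) y)
    (hφy_pos : ∀ l : ℝ, 0 < l → ∀ y : ℝ, 0 < φy l y) {τm : ℝ → EReal}
    (hτm : ∀ l : ℝ, 0 < l → Tendsto (fun y => (φ l y : EReal)) atBot (nhds (τm l)))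
    (hτm_anti : AntitoneOn τm (Set.Ioi (0:ℝ))) {l₁ l₂ : ℝ} (hl₁ : 0 < l₁) (h12 : l₁ ≤ l₂)
    (h : ∃ u, φ l₁ u < x) : ∃ u, φ l₂ u < x := by
  obtain ⟨u, hu⟩ := h
  by_contra! hx
  have hl₂ : 0 < l₂ := hl₁.trans_le h12
  have hmono := (strictMono_of_hasDerivAt_pos (hφy l₁ hl₁) (hφy_pos l₁ hl₁)).monotone
  have h₂ : (x : EReal) ≤ τm l₂ :=
    ge_of_tendsto (hτm l₂ hl₂) (Eventually.of_forall fun y => EReal.coe_le_coe_iff.2 (hx y))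
  have h₁ : τm l₁ ≤ (φ l₁ u : EReal) :=
    le_of_tendsto (hτm l₁ hl₁) (by
      filter_upwards [eventually_le_atBot u] with v hv
      exact EReal.coe_le_coe_iff.2 (hmono hv))
  have := EReal.coe_le_coe_iff.1 (h₂.trans ((hτm_anti hl₁ hl₂ h12).trans h₁))
  linarith

theorem exists_lt_apply_of_le
    (hφy : ∀ l : ℝ, 0 < l → ∀ y : ℝ, HasDerivAt (fun y' => φ l y') (φy l y) y)
    (hφy_pos : ∀ l : ℝ, 0 < l → ∀ y : ℝ, 0 < φy l y)
    (hτp : (∀ l : ℝ, 0 < l → Tendsto (fun y => φ l y) atTop atTop) ∨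
      (∃ τp : ℝ → ℝ, (∀ l : ℝ, 0 < l → Tendsto (fun y => φ l y) atTop (nhds (τp l))) ∧
        MonotoneOn τp (Set.Ioi (0:ℝ)) ∧ ContDiffOn ℝ 1 τp (Set.Ioi (0:ℝ))))
    {l₁ l₂ : ℝ} (hl₁ : 0 < l₁) (h12 : l₁ ≤ l₂)
    (h : ∃ u, x < φ l₁ u) : ∃ u, x < φ l₂ u := by
  have hl₂ : 0 < l₂ := hl₁.trans_le h12
  rcases hτp with hτp | ⟨τp, hτp, hτp_mono, -⟩
  · exact ((hτp l₂ hl₂).eventually (eventually_gt_atTop x)).exists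
  obtain ⟨u, hu⟩ := h
  by_contra! hx
  have hmono := (strictMono_of_hasDerivAt_pos (hφy l₁ hl₁) (hφy_pos l₁ hl₁)).monotone
  have h₂ : τp l₂ ≤ x := le_of_tendsto' (hτp l₂ hl₂) hx
  have h₁ : φ l₁ u ≤ τp l₁ :=
    ge_of_tendsto (hτp l₁ hl₁) (by filter_upwards [eventually_ge_atTop u] with v hv using hmono hv)
  linarith [hτp_mono hl₁ hl₂ h12]

theorem exists_apply_eq_of_le
    (hφy : ∀ l : ℝ, 0 < l → ∀ y : ℝ, HasDerivAt (fun y' => φ l y') (φy l y) y)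
    (hφy_pos : ∀ l : ℝ, 0 < l → ∀ y : ℝ, 0 < φy l y) {τm : ℝ → EReal}
    (hτm : ∀ l : ℝ, 0 < l → Tendsto (fun y => (φ l y : EReal)) atBot (nhds (τm l)))
    (hτm_anti : AntitoneOn τm (Set.Ioi (0:ℝ)))
    (hτp : (∀ l : ℝ, 0 < l → Tendsto (fun y => φ l y) atTop atTop) ∨
      (∃ τp : ℝ → ℝ, (∀ l : ℝ, 0 < l → Tendsto (fun y => φ l y) atTop (nhds (τp l))) ∧
        MonotoneOn τp (Set.Ioi (0:ℝ)) ∧ ContDiffOn ℝ 1 τp (Set.Ioi (0:ℝ))))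
    {l₁ l₂ : ℝ} (hl₁ : 0 < l₁) (h12 : l₁ ≤ l₂) (hlow : ∃ u, φ l₁ u < x)
    (hup : ∃ u, x < φ l₁ u) : ∃ r, φ l₂ r = x := by
  obtain ⟨a, ha⟩ := exists_apply_lt_of_le hφy hφy_pos hτm hτm_anti hl₁ h12 hlow
  obtain ⟨b, hb⟩ := exists_lt_apply_of_le hφy hφy_pos hτp hl₁ h12 hup
  exact intermediate_value_univ a b
    (continuous_iff_continuousAt.2 fun y => (hφy l₂ (hl₁.trans_le h12) y).continuousAt)
    ⟨ha.le, hb.le⟩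

theorem hasDerivAt_toReal_measure_le [IsProbabilityMeasure P]
    (hf_pos : ∀ x, 0 < f x) (hf_cont : Continuous f)
    (hf_density : ∀ s : Set ℝ, MeasurableSet s →
      P (Y ⁻¹' s) = ENNReal.ofReal (∫ u in s, f u))
    (hφy : ∀ l : ℝ, 0 < l → ∀ y : ℝ, HasDerivAt (fun y' => φ l y') (φy l y) y)
    (hφl : ∀ l : ℝ, 0 < l → ∀ y : ℝ, HasDerivAt (fun l' => φ l' y) (φl l y) l)
    (hφy_cont : ContinuousOn (fun p : ℝ × ℝ => φy p.1 p.2) (Set.Ioi 0 ×ˢ Set.univ))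
    (hφl_cont : ContinuousOn (fun p : ℝ × ℝ => φl p.1 p.2) (Set.Ioi 0 ×ˢ Set.univ))
    (hφy_pos : ∀ l : ℝ, 0 < l → ∀ y : ℝ, 0 < φy l y) (hl : 0 < l) (hr : φ l r = x) :
    HasDerivAt (fun l' => (P {ω | x ≤ φ l' (Y ω)}).toReal) (f r * (φl l r / φy l r)) l := by
  have hf_int := integrable_of_density hf_density
  have hpos : ∀ᶠ p : ℝ × ℝ in 𝓝 (l, r), 0 < p.1 :=
    continuousAt_fst.eventually (eventually_gt_nhds hl)
  have hmem : Ioi 0 ×ˢ univ ∈ 𝓝 (l, r) := prod_mem_nhds (Ioi_mem_nhds hl) univ_mem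
  obtain ⟨ψ, hψl, hψ_eq, hψ⟩ := exists_hasDerivAt_implicit
    (hpos.mono fun p hp => hφl p.1 hp p.2) (hpos.mono fun p hp => hφy p.1 hp p.2)
    (hφl_cont.continuousAt hmem) (hφy_cont.continuousAt hmem) (hφy_pos l hl r).ne'
  have hS := (hasDerivAt_survival hf_cont hf_int (ψ l)).comp l hψ
  rw [hψl] at hS
  refine (hS.congr_deriv (by ring)).congr_of_eventuallyEq ?_
  filter_upwards [hψ_eq, eventually_gt_nhds hl] with l' hl' hl'_pos
  rw [Function.comp_apply, (strictMono_of_hasDerivAt_pos (hφy l' hl'_pos)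
    (hφy_pos l' hl'_pos)).setOf_le_comp_eq (hl'.trans hr) Y, hf_density _ measurableSet_Ici]
  exact ENNReal.toReal_ofReal (survival_pos hf_pos hf_int _).le

theorem setIntegral_partial_nonneg (hYmeas : Measurable Y)
    (hφy : ∀ l : ℝ, 0 < l → ∀ y : ℝ, HasDerivAt (fun y' => φ l y') (φy l y) y)
    (hφl : ∀ l : ℝ, 0 < l → ∀ y : ℝ, HasDerivAt (fun l' => φ l' y) (φl l y) l)
    (hφl_cont : ContinuousOn (fun p : ℝ × ℝ => φl p.1 p.2) (Set.Ioi 0 ×ˢ Set.univ))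
    (hφy_pos : ∀ l : ℝ, 0 < l → ∀ y : ℝ, 0 < φy l y)
    (hratio : ∀ l : ℝ, 0 < l → Monotone (fun y => φl l y / φy l y))
    (hint : ∀ η : ℝ, 0 < η → Integrable (fun ω => φ η (Y ω)) P)
    (hdom : ∀ η : ℝ, 0 < η → ∃ g : Ω → ℝ, Integrable g P ∧
      ∀ ω : Ω, ∀ l ∈ Set.Ioc (0:ℝ) η, |φl l (Y ω)| ≤ g ω)
    (hcentered : ∀ l : ℝ, 0 ≤ l → (∫ ω, φ l (Y ω) ∂P) = 0) (hl : 0 < l) (hr : φ l r = x)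
    (hr₀ : φl l r / φy l r ≤ 0) : 0 ≤ ∫ ω in {ω | x ≤ φ l (Y ω)}, φl l (Y ω) ∂P := by
  rw [(strictMono_of_hasDerivAt_pos (hφy l hl) (hφy_pos l hl)).setOf_le_comp_eq hr Y]
  have hsplit := integral_add_compl (μ := P) ((measurableSet_Ici (a := r)).preimage hYmeas)
    (integrable_partial hYmeas hφl_cont hdom hl)
  rw [integral_partial_eq_zero hYmeas hφy hφl hφl_cont hint hdom hcentered hl] at hsplit
  suffices ∫ ω in (Y ⁻¹' Ici r)ᶜ, φl l (Y ω) ∂P ≤ 0 by linarith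
  refine setIntegral_nonpos (measurableSet_Ici.preimage hYmeas).compl fun ω hω => ?_
  have hY : Y ω ≤ r := (not_le.1 (show ¬ r ≤ Y ω from hω)).le
  have := hratio l hl hY
  have hpos := hφy_pos l hl (Y ω)
  rw [div_le_iff₀ hpos] at this
  nlinarith

theorem integral_max_sub_mul_le_of_pos [IsProbabilityMeasure P] (hYmeas : Measurable Y)
    (hf_pos : ∀ x, 0 < f x) (hf_cont : Continuous f)
    (hf_density : ∀ s : Set ℝ, MeasurableSet s →
      P (Y ⁻¹' s) = ENNReal.ofReal (∫ u in s, f u))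
    (hconc : ConcaveOn ℝ univ fun z => Real.log (survival f z))
    (hφy : ∀ l : ℝ, 0 < l → ∀ y : ℝ, HasDerivAt (fun y' => φ l y') (φy l y) y)
    (hφy_cont : ContinuousOn (fun p : ℝ × ℝ => φy p.1 p.2) (Set.Ioi 0 ×ˢ Set.univ))
    (hφl_cont : ContinuousOn (fun p : ℝ × ℝ => φl p.1 p.2) (Set.Ioi 0 ×ˢ Set.univ))
    (hφy_pos : ∀ l : ℝ, 0 < l → ∀ y : ℝ, 0 < φy l y)
    (hratio : ∀ l : ℝ, 0 < l → Monotone (fun y => φl l y / φy l y))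
    (hint : ∀ η : ℝ, 0 < η → Integrable (fun ω => φ η (Y ω)) P)
    (hdom : ∀ η : ℝ, 0 < η → ∃ g : Ω → ℝ, Integrable g P ∧
      ∀ ω : Ω, ∀ l ∈ Set.Ioc (0:ℝ) η, |φl l (Y ω)| ≤ g ω)
    (hl : 0 < l) (hr : φ l r = x) (hr₀ : 0 < φl l r / φy l r) :
    (∫ ω, max (φ l (Y ω) - x) 0 ∂P) * (f r * (φl l r / φy l r))
      ≤ (∫ ω in {ω | x ≤ φ l (Y ω)}, φl l (Y ω) ∂P) * survival f r := by
  set r₀ := φl l r / φy l r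
  have hmono := strictMono_of_hasDerivAt_pos (hφy l hl) (hφy_pos l hl)
  rw [hmono.setOf_le_comp_eq hr Y]
  have hE : MeasurableSet (Y ⁻¹' Ici r) := measurableSet_Ici.preimage hYmeas
  have hge : ∀ ω ∈ Y ⁻¹' Ici r, r₀ * φy l (Y ω) ≤ φl l (Y ω) := fun ω (hω : r ≤ Y ω) => by
    have := hratio l hl hω
    rwa [le_div_iff₀ (hφy_pos l hl _)] at this
  have hA'_nonneg : 0 ≤ ∫ ω in Y ⁻¹' Ici r, φl l (Y ω) ∂P := setIntegral_nonneg hE fun ω hω =>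
    (mul_nonneg hr₀.le (hφy_pos l hl _).le).trans (hge ω hω)
  have hA_nonneg : 0 ≤ ∫ ω, max (φ l (Y ω) - x) 0 ∂P := integral_nonneg fun _ => le_max_right _ _
  have hA : ENNReal.ofReal (∫ ω, max (φ l (Y ω) - x) 0 ∂P)
      = ∫⁻ ω, ENNReal.ofReal (φ l (max (Y ω) r) - φ l r) ∂P := by
    rw [ofReal_integral_eq_lintegral_ofReal (integrable_max_sub (hint l hl) x)
      (ae_of_all _ fun ω => le_max_right _ _)]
    congr 1
    ext ω
    rw [hmono.monotone.map_max, ← max_sub_sub_right, sub_self, hr]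
  have hA' : ENNReal.ofReal r₀ * ∫⁻ ω in Y ⁻¹' Ici r, ENNReal.ofReal (φy l (Y ω)) ∂P
      ≤ ENNReal.ofReal (∫ ω in Y ⁻¹' Ici r, φl l (Y ω) ∂P) := by
    rw [← lintegral_const_mul' _ _ ENNReal.ofReal_ne_top, ofReal_integral_eq_lintegral_ofReal
      (integrable_partial hYmeas hφl_cont hdom hl).integrableOn ((ae_restrict_iff' hE).2
        (ae_of_all _ fun ω hω => (mul_nonneg hr₀.le (hφy_pos l hl _).le).trans (hge ω hω)))]
    refine setLIntegral_mono' hE fun ω hω => ?_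
    rw [← ENNReal.ofReal_mul hr₀.le]
    exact ENNReal.ofReal_le_ofReal (hge ω hω)
  have key := density_mul_lintegral_max_sub_le hYmeas hf_pos hf_cont hf_density hconc (hφy l hl)
    (hφy_cont.continuous_slice hl) (fun u => (hφy_pos l hl u).le) r
  rw [← hA] at key
  rw [← ENNReal.ofReal_le_ofReal_iff (mul_nonneg hA'_nonneg (survival_pos hf_pos
    (integrable_of_density hf_density) r).le), ENNReal.ofReal_mul hA_nonneg,
    ENNReal.ofReal_mul (hf_pos r).le, ENNReal.ofReal_mul hA'_nonneg]
  calc _ = ENNReal.ofReal (f r) * ENNReal.ofReal (∫ ω, max (φ l (Y ω) - x) 0 ∂P)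
        * ENNReal.ofReal r₀ := by ring
    _ ≤ ENNReal.ofReal (survival f r) * (∫⁻ ω in Y ⁻¹' Ici r, ENNReal.ofReal (φy l (Y ω)) ∂P)
        * ENNReal.ofReal r₀ := mul_le_mul_left key _
    _ = (ENNReal.ofReal r₀ * ∫⁻ ω in Y ⁻¹' Ici r, ENNReal.ofReal (φy l (Y ω)) ∂P)
        * ENNReal.ofReal (survival f r) := by ring
    _ ≤ _ := mul_le_mul_left hA' _

theorem integral_max_sub_mul_le [IsProbabilityMeasure P] (hYmeas : Measurable Y)
    (hf_pos : ∀ x, 0 < f x) (hf_cont : Continuous f)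
    (hf_density : ∀ s : Set ℝ, MeasurableSet s →
      P (Y ⁻¹' s) = ENNReal.ofReal (∫ u in s, f u))
    (hconc : ConcaveOn ℝ univ fun z => Real.log (survival f z))
    (hφy : ∀ l : ℝ, 0 < l → ∀ y : ℝ, HasDerivAt (fun y' => φ l y') (φy l y) y)
    (hφl : ∀ l : ℝ, 0 < l → ∀ y : ℝ, HasDerivAt (fun l' => φ l' y) (φl l y) l)
    (hφy_cont : ContinuousOn (fun p : ℝ × ℝ => φy p.1 p.2) (Set.Ioi 0 ×ˢ Set.univ))
    (hφl_cont : ContinuousOn (fun p : ℝ × ℝ => φl p.1 p.2) (Set.Ioi 0 ×ˢ Set.univ))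
    (hφy_pos : ∀ l : ℝ, 0 < l → ∀ y : ℝ, 0 < φy l y)
    (hratio : ∀ l : ℝ, 0 < l → Monotone (fun y => φl l y / φy l y))
    (hint : ∀ η : ℝ, 0 < η → Integrable (fun ω => φ η (Y ω)) P)
    (hdom : ∀ η : ℝ, 0 < η → ∃ g : Ω → ℝ, Integrable g P ∧
      ∀ ω : Ω, ∀ l ∈ Set.Ioc (0:ℝ) η, |φl l (Y ω)| ≤ g ω)
    (hcentered : ∀ l : ℝ, 0 ≤ l → (∫ ω, φ l (Y ω) ∂P) = 0) (hl : 0 < l) (hr : φ l r = x) :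
    (∫ ω, max (φ l (Y ω) - x) 0 ∂P) * (f r * (φl l r / φy l r))
      ≤ (∫ ω in {ω | x ≤ φ l (Y ω)}, φl l (Y ω) ∂P) * survival f r := by
  rcases le_or_gt (φl l r / φy l r) 0 with hr₀ | hr₀
  · calc _ ≤ 0 := mul_nonpos_of_nonneg_of_nonpos (integral_nonneg fun _ => le_max_right _ _)
          (mul_nonpos_of_nonneg_of_nonpos (hf_pos r).le hr₀)
      _ ≤ _ := mul_nonneg (setIntegral_partial_nonneg hYmeas hφy hφl hφl_cont hφy_pos hratio hint
          hdom hcentered hl hr hr₀) (survival_pos hf_pos (integrable_of_density hf_density) r).le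
  · exact integral_max_sub_mul_le_of_pos hYmeas hf_pos hf_cont hf_density hconc hφy hφy_cont
      hφl_cont hφy_pos hratio hint hdom hl hr hr₀

theorem exists_hasDerivAt_hardyLittlewood [IsProbabilityMeasure P] (hYmeas : Measurable Y)
    (hf_pos : ∀ x, 0 < f x) (hf_cont : Continuous f)
    (hf_density : ∀ s : Set ℝ, MeasurableSet s →
      P (Y ⁻¹' s) = ENNReal.ofReal (∫ u in s, f u))
    (hconc : ConcaveOn ℝ univ fun z => Real.log (survival f z))
    (hφy : ∀ l : ℝ, 0 < l → ∀ y : ℝ, HasDerivAt (fun y' => φ l y') (φy l y) y)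
    (hφl : ∀ l : ℝ, 0 < l → ∀ y : ℝ, HasDerivAt (fun l' => φ l' y) (φl l y) l)
    (hφy_cont : ContinuousOn (fun p : ℝ × ℝ => φy p.1 p.2) (Set.Ioi 0 ×ˢ Set.univ))
    (hφl_cont : ContinuousOn (fun p : ℝ × ℝ => φl p.1 p.2) (Set.Ioi 0 ×ˢ Set.univ))
    (hφy_pos : ∀ l : ℝ, 0 < l → ∀ y : ℝ, 0 < φy l y)
    (hratio : ∀ l : ℝ, 0 < l → Monotone (fun y => φl l y / φy l y))
    (hint : ∀ η : ℝ, 0 < η → Integrable (fun ω => φ η (Y ω)) P)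
    (hdom : ∀ η : ℝ, 0 < η → ∃ g : Ω → ℝ, Integrable g P ∧
      ∀ ω : Ω, ∀ l ∈ Set.Ioc (0:ℝ) η, |φl l (Y ω)| ≤ g ω)
    (hcentered : ∀ l : ℝ, 0 ≤ l → (∫ ω, φ l (Y ω) ∂P) = 0) (hl : 0 < l) (hr : φ l r = x) :
    ∃ D, 0 ≤ D ∧ HasDerivAt (fun l' => hardyLittlewood P (fun ω => φ l' (Y ω)) x) D l := by
  obtain ⟨g, hg, hbound⟩ := hdom (2 * l) (by linarith)
  have hs : Ioo 0 (2 * l) ∈ 𝓝 l := Ioo_mem_nhds hl (by linarith)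
  have hmono := strictMono_of_hasDerivAt_pos (hφy l hl) (hφy_pos l hl)
  have hatom : P {ω | φ l (Y ω) = x} = 0 := by
    have : {ω | φ l (Y ω) = x} = Y ⁻¹' {r} := by ext ω; simp [← hr, hmono.injective.eq_iff]
    rw [this, hf_density _ (measurableSet_singleton r)]
    simp
  have hA := hasDerivAt_integral_max_sub hs
    (fun l' hl' => (continuous_iff_continuousAt.2 fun y =>
      (hφy l' hl'.1 y).continuousAt).measurable.comp hYmeas)
    (hint l hl) (integrable_partial hYmeas hφl_cont hdom hl).aestronglyMeasurable
    (fun ω => (lipschitzOnWith_Ioc_of_abs_le hφl (hbound ω)).mono Ioo_subset_Ioc_self) hg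
    (fun ω => hφl l hl (Y ω)) hatom
  have hp := hasDerivAt_toReal_measure_le hf_pos hf_cont hf_density hφy hφl hφy_cont hφl_cont
    hφy_pos hl hr
  have hS := survival_pos hf_pos (integrable_of_density hf_density) r
  have hp_eq : (P {ω | x ≤ φ l (Y ω)}).toReal = survival f r := by
    rw [hmono.setOf_le_comp_eq hr Y, hf_density _ measurableSet_Ici]
    exact ENNReal.toReal_ofReal hS.le
  refine ⟨_, ?_, (hA.div hp (hp_eq ▸ hS.ne')).const_add x⟩
  rw [hp_eq]
  exact div_nonneg (sub_nonneg.2 (integral_max_sub_mul_le hYmeas hf_pos hf_cont hf_density hconc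
    hφy hφl hφy_cont hφl_cont hφy_pos hratio hint hdom hcentered hl hr)) (sq_nonneg _)

theorem hardyLittlewood_mono_of_pos [IsProbabilityMeasure P] (hYmeas : Measurable Y)
    (hf_pos : ∀ x, 0 < f x) (hf_cont : Continuous f)
    (hf_density : ∀ s : Set ℝ, MeasurableSet s →
      P (Y ⁻¹' s) = ENNReal.ofReal (∫ u in s, f u))
    (hconc : ConcaveOn ℝ univ fun z => Real.log (survival f z))
    (hφy : ∀ l : ℝ, 0 < l → ∀ y : ℝ, HasDerivAt (fun y' => φ l y') (φy l y) y)
    (hφl : ∀ l : ℝ, 0 < l → ∀ y : ℝ, HasDerivAt (fun l' => φ l' y) (φl l y) l)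
    (hφy_cont : ContinuousOn (fun p : ℝ × ℝ => φy p.1 p.2) (Set.Ioi 0 ×ˢ Set.univ))
    (hφl_cont : ContinuousOn (fun p : ℝ × ℝ => φl p.1 p.2) (Set.Ioi 0 ×ˢ Set.univ))
    (hφy_pos : ∀ l : ℝ, 0 < l → ∀ y : ℝ, 0 < φy l y)
    (hratio : ∀ l : ℝ, 0 < l → Monotone (fun y => φl l y / φy l y)) {τm : ℝ → EReal}
    (hτm : ∀ l : ℝ, 0 < l → Tendsto (fun y => (φ l y : EReal)) atBot (nhds (τm l)))
    (hτm_anti : AntitoneOn τm (Set.Ioi (0:ℝ)))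
    (hτp : (∀ l : ℝ, 0 < l → Tendsto (fun y => φ l y) atTop atTop) ∨
      (∃ τp : ℝ → ℝ, (∀ l : ℝ, 0 < l → Tendsto (fun y => φ l y) atTop (nhds (τp l))) ∧
        MonotoneOn τp (Set.Ioi (0:ℝ)) ∧ ContDiffOn ℝ 1 τp (Set.Ioi (0:ℝ))))
    (hint : ∀ η : ℝ, 0 < η → Integrable (fun ω => φ η (Y ω)) P)
    (hdom : ∀ η : ℝ, 0 < η → ∃ g : Ω → ℝ, Integrable g P ∧
      ∀ ω : Ω, ∀ l ∈ Set.Ioc (0:ℝ) η, |φl l (Y ω)| ≤ g ω)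
    (hcentered : ∀ l : ℝ, 0 ≤ l → (∫ ω, φ l (Y ω) ∂P) = 0) {l₁ l₂ : ℝ} (hl₁ : 0 < l₁)
    (h12 : l₁ ≤ l₂) :
    hardyLittlewood P (fun ω => φ l₁ (Y ω)) x ≤ hardyLittlewood P (fun ω => φ l₂ (Y ω)) x := by
  by_cases hup : ∃ u, x < φ l₁ u
  swap
  · simp only [not_exists, not_lt] at hup
    rw [hardyLittlewood_eq_self fun ω => hup (Y ω)]
    exact le_hardyLittlewood
  by_cases hlow : ∃ u, φ l₁ u < x
  swap
  · simp only [not_exists, not_lt] at hlow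
    rw [hardyLittlewood_eq_integral (hint l₁ hl₁) fun ω => hlow (Y ω), hcentered l₁ hl₁.le,
      ← hcentered l₂ (hl₁.le.trans h12)]
    exact integral_le_hardyLittlewood (hint l₂ (hl₁.trans_le h12))
  have hderiv : ∀ l ∈ Icc l₁ l₂, ∃ D, 0 ≤ D ∧
      HasDerivAt (fun l' => hardyLittlewood P (fun ω => φ l' (Y ω)) x) D l := fun l hl =>
    have ⟨r, hr⟩ := exists_apply_eq_of_le hφy hφy_pos hτm hτm_anti hτp hl₁ hl.1 hlow hup
    exists_hasDerivAt_hardyLittlewood hYmeas hf_pos hf_cont hf_density hconc hφy hφl hφy_cont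
      hφl_cont hφy_pos hratio hint hdom hcentered (hl₁.trans_le hl.1) hr
  refine monotoneOn_of_deriv_nonneg (convex_Icc l₁ l₂)
    (fun l hl => have ⟨_, _, hD⟩ := hderiv l hl; hD.continuousAt.continuousWithinAt)
    (fun l hl => have ⟨_, _, hD⟩ := hderiv l (interior_subset hl);
      hD.differentiableAt.differentiableWithinAt)
    (fun l hl => have ⟨_, hD_nonneg, hD⟩ := hderiv l (interior_subset hl); hD.deriv ▸ hD_nonneg)
    (left_mem_Icc.2 h12) (right_mem_Icc.2 h12) h12

theorem hardyLittlewood_zero_le [IsProbabilityMeasure P] (hYmeas : Measurable Y)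
    (hφ_cont : ContinuousOn (fun p : ℝ × ℝ => φ p.1 p.2) (Set.Ici 0 ×ˢ Set.univ))
    (hφl : ∀ l : ℝ, 0 < l → ∀ y : ℝ, HasDerivAt (fun l' => φ l' y) (φl l y) l)
    (hint : ∀ η : ℝ, 0 < η → Integrable (fun ω => φ η (Y ω)) P)
    (hdom : ∀ η : ℝ, 0 < η → ∃ g : Ω → ℝ, Integrable g P ∧
      ∀ ω : Ω, ∀ l ∈ Set.Ioc (0:ℝ) η, |φl l (Y ω)| ≤ g ω)
    {l₂ : ℝ} (hl₂ : 0 < l₂)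
    (hmono : ∀ l ∈ Ioc 0 l₂, hardyLittlewood P (fun ω => φ l (Y ω)) x
      ≤ hardyLittlewood P (fun ω => φ l₂ (Y ω)) x) :
    hardyLittlewood P (fun ω => φ 0 (Y ω)) x ≤ hardyLittlewood P (fun ω => φ l₂ (Y ω)) x := by
  obtain ⟨g, hg, hbound⟩ := hdom l₂ hl₂
  set L : ℕ → ℝ := fun n => l₂ / (n + 1)
  have hL : ∀ n, L n ∈ Ioc 0 l₂ := fun n =>
    ⟨by positivity, div_le_self hl₂.le (by linarith [n.cast_nonneg (α := ℝ)])⟩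
  have hL_lim : Tendsto L atTop (𝓝 0) := by
    simpa [L, div_eq_mul_one_div l₂] using
      (tendsto_one_div_add_atTop_nhds_zero_nat (𝕜 := ℝ)).const_mul l₂
  refine hardyLittlewood_le_of_tendsto (X := fun n ω => φ (L n) (Y ω))
    (bound := fun ω => |φ l₂ (Y ω)| + |g ω| * l₂)
    (fun n => (hφ_cont.continuous_slice (hL n).1.le).measurable.comp hYmeas)
    ((hint l₂ hl₂).abs.add (hg.abs.mul_const l₂)) (fun n ω => ?_) (fun ω => ?_)
    (fun n => hmono _ (hL n))
  · have hlip := (lipschitzOnWith_Ioc_of_abs_le hφl (hbound ω)).dist_le_mul _ (hL n) _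
      (right_mem_Ioc.2 hl₂)
    rw [Real.coe_nnabs, Real.dist_eq, Real.dist_eq] at hlip
    have hdist : |L n - l₂| ≤ l₂ := abs_le.2 ⟨by linarith [(hL n).1], by linarith [(hL n).2]⟩
    have := abs_sub_abs_le_abs_sub (φ (L n) (Y ω)) (φ l₂ (Y ω))
    nlinarith [mul_le_mul_of_nonneg_left hdist (abs_nonneg (g ω))]
  · exact (hφ_cont (0, Y ω) ⟨mem_Ici.2 le_rfl, trivial⟩).tendsto.comp (tendsto_nhdsWithin_iff.2
      ⟨hL_lim.prodMk_nhds tendsto_const_nhds,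
        Eventually.of_forall fun n => ⟨(hL n).1.le, trivial⟩⟩)

end Model

/-- Theorem (MRL peacocks from monotone transformations of IFR random variables).
If `φ ∈ 𝓗` (continuous on `ℝ≥0 × ℝ`, `C¹` on `(0,∞) × ℝ`, with `∂φ/∂y > 0`,
non-decreasing ratio `(∂φ/∂λ)/(∂φ/∂y)` in `y`, non-increasing lower limit `τ₋` and
upper limit `τ₊` either `≡ +∞` or non-decreasing and `C¹`), and if `Y` has a positive
continuous density with log-concave survival function, with the stated integrability
conditions and `E[φ(λ,Y)] = 0` for all `λ ≥ 0`, then `(φ(λ,Y))_{λ≥0}` is a centered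
process increasing in the mean residual life order. -/
theorem mrl_process_of_transformation {Ω : Type*} [MeasurableSpace Ω]
    (P : Measure Ω) [IsProbabilityMeasure P]
    (Y : Ω → ℝ) (hYmeas : Measurable Y)
    (f : ℝ → ℝ) (hf_pos : ∀ x, 0 < f x) (hf_cont : Continuous f)
    (hf_density : ∀ s : Set ℝ, MeasurableSet s →
      P (Y ⁻¹' s) = ENNReal.ofReal (∫ u in s, f u))
    (hsurv_logconc : ConcaveOn ℝ Set.univ
      (fun z => Real.log (∫ u in Set.Ici z, f u)))
    (φ φl φy : ℝ → ℝ → ℝ)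
    (hφ_cont : ContinuousOn (fun p : ℝ × ℝ => φ p.1 p.2) (Set.Ici 0 ×ˢ Set.univ))
    (hφy : ∀ l : ℝ, 0 < l → ∀ y : ℝ, HasDerivAt (fun y' => φ l y') (φy l y) y)
    (hφl : ∀ l : ℝ, 0 < l → ∀ y : ℝ, HasDerivAt (fun l' => φ l' y) (φl l y) l)
    (hφy_cont : ContinuousOn (fun p : ℝ × ℝ => φy p.1 p.2) (Set.Ioi 0 ×ˢ Set.univ))
    (hφl_cont : ContinuousOn (fun p : ℝ × ℝ => φl p.1 p.2) (Set.Ioi 0 ×ˢ Set.univ))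
    (hφy_pos : ∀ l : ℝ, 0 < l → ∀ y : ℝ, 0 < φy l y)
    (hratio : ∀ l : ℝ, 0 < l → Monotone (fun y => φl l y / φy l y))
    (τm : ℝ → EReal)
    (hτm : ∀ l : ℝ, 0 < l →
      Tendsto (fun y => (φ l y : EReal)) atBot (nhds (τm l)))
    (hτm_anti : AntitoneOn τm (Set.Ioi (0:ℝ)))
    (hτp : (∀ l : ℝ, 0 < l → Tendsto (fun y => φ l y) atTop atTop) ∨
      (∃ τp : ℝ → ℝ, (∀ l : ℝ, 0 < l → Tendsto (fun y => φ l y) atTop (nhds (τp l))) ∧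
        MonotoneOn τp (Set.Ioi (0:ℝ)) ∧ ContDiffOn ℝ 1 τp (Set.Ioi (0:ℝ))))
    (hint : ∀ η : ℝ, 0 < η → Integrable (fun ω => φ η (Y ω)) P)
    (hdom : ∀ η : ℝ, 0 < η → ∃ g : Ω → ℝ, Integrable g P ∧
      ∀ ω : Ω, ∀ l ∈ Set.Ioc (0:ℝ) η, |φl l (Y ω)| ≤ g ω)
    (hcentered : ∀ l : ℝ, 0 ≤ l → (∫ ω, φ l (Y ω) ∂P) = 0)
    (Ψ : ℝ → ℝ → ℝ)
    (hΨ : ∀ l : ℝ, 0 ≤ l → ∀ x : ℝ, Ψ l x =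
      if P {ω | x ≤ φ l (Y ω)} ≠ 0 then
        x + (∫ ω, max (φ l (Y ω) - x) 0 ∂P) / (P {ω | x ≤ φ l (Y ω)}).toReal
      else x) :
    ∀ l₁ l₂ : ℝ, 0 ≤ l₁ → l₁ ≤ l₂ → ∀ x : ℝ, Ψ l₁ x ≤ Ψ l₂ x := by
  intro l₁ l₂ hl₁ h12 x
  rw [hΨ l₁ hl₁ x, hΨ l₂ (hl₁.trans h12) x, ite_eq_hardyLittlewood, ite_eq_hardyLittlewood]
  have hmono : ∀ {a b : ℝ}, 0 < a → a ≤ b → hardyLittlewood P (fun ω => φ a (Y ω)) x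
      ≤ hardyLittlewood P (fun ω => φ b (Y ω)) x := fun ha hab =>
    hardyLittlewood_mono_of_pos hYmeas hf_pos hf_cont hf_density hsurv_logconc hφy hφl hφy_cont
      hφl_cont hφy_pos hratio hτm hτm_anti hτp hint hdom hcentered ha hab
  rcases hl₁.eq_or_lt with rfl | hl₁
  · rcases h12.eq_or_lt with rfl | hl₂
    · exact le_rfl
    · exact hardyLittlewood_zero_le hYmeas hφ_cont hφl hint hdom hl₂ fun l hl => hmono hl.1 hl.2
  · exact hmono hl₁ h12
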